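/- There exists a market on a bipartite trading graph (an 8-cycle with 4 buyers of valuation 1 and 4 sellers of valuation 0) and an infinite sequence of legal moves of the deterministic double-oral-auction mechanism with increment ε that never converges: the sequence of states is eventually periodic up to a graph automorphism, returning to an isomorphic state every 2 steps. -/

import Mathlib

open Finset

/-- A market: buyers `B`, sellers `S`, trading edges `E`, valuations in `[0,1]`. -/
structure Market (B S : Type*) [Fintype B] [Fintype S] where
  E : Finset (B × S)
  valB : B → ℝ
  valS : S → ℝ
  valB_nonneg : ∀ b, 0 ≤ valB b
  valB_le_one : ∀ b, valB b ≤ 1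
  valS_nonneg : ∀ s, 0 ≤ valS s
  valS_le_one : ∀ s, valS s ≤ 1

/-- A state of the market: prices submitted by buyers and sellers, and a matching. -/
structure MState (B S : Type*) where
  PB : B → ℝ
  PS : S → ℝ
  M : Finset (B × S)

variable {B S : Type*} [Fintype B] [Fintype S]

/-- `Mat` is a matching contained in the edge set. -/
def IsMatching (Mk : Market B S) (Mat : Finset (B × S)) : Prop :=
  Mat ⊆ Mk.E ∧ (∀ p ∈ Mat, ∀ q ∈ Mat, p.1 = q.1 → p = q) ∧
    (∀ p ∈ Mat, ∀ q ∈ Mat, p.2 = q.2 → p = q)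

def BMatched (st : MState B S) (b : B) : Prop := ∃ s, (b, s) ∈ st.M
def SMatched (st : MState B S) (s : S) : Prop := ∃ b, (b, s) ∈ st.M

/-- A valid state: bids below valuations, offers above opportunity costs,
and within a matched pair the bid is at least the offer. -/
def ValidState (Mk : Market B S) (st : MState B S) : Prop :=
  IsMatching Mk st.M ∧ (∀ b, st.PB b ≤ Mk.valB b) ∧ (∀ s, Mk.valS s ≤ st.PS s) ∧
    ∀ p ∈ st.M, st.PS p.2 ≤ st.PB p.1

/-- Social welfare of a matching. -/
def SW (Mk : Market B S) (Mat : Finset (B × S)) : ℝ :=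
  ∑ p ∈ Mat, (Mk.valB p.1 - Mk.valS p.2)

/-- Stable state: no bid above an offer on any edge, unmatched agents submit their
valuations, matched pairs have equal prices. -/
def IsStable (Mk : Market B S) (st : MState B S) : Prop :=
  (∀ p ∈ Mk.E, st.PB p.1 ≤ st.PS p.2) ∧
  (∀ b, ¬ BMatched st b → st.PB b = Mk.valB b) ∧
  (∀ s, ¬ SMatched st s → st.PS s = Mk.valS s) ∧
  ∀ p ∈ st.M, st.PB p.1 = st.PS p.2

/-- ε-stable state. -/
def IsEpsStable (Mk : Market B S) (ε : ℝ) (st : MState B S) : Prop :=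
  (∀ p ∈ Mk.E, st.PB p.1 - st.PS p.2 ≤ ε) ∧
  (∀ b, ¬ BMatched st b → st.PB b = Mk.valB b) ∧
  (∀ s, ¬ SMatched st s → st.PS s = Mk.valS s) ∧
  ∀ p ∈ st.M, st.PB p.1 = st.PS p.2

/-- `x` is an integer multiple of `ε`. -/
def MulEps (ε x : ℝ) : Prop := ∃ k : ℤ, x = k * ε

variable [DecidableEq B] [DecidableEq S]

/-- Seller `s` is ε-interested in buyer `b` bidding `b'`. -/
def SellerInterested (Mk : Market B S) (ε : ℝ) (st : MState B S) (b' : ℝ) (b : B) (s : S) : Prop :=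
  (b, s) ∈ Mk.E ∧ ((¬ SMatched st s ∧ st.PS s ≤ b') ∨ (SMatched st s ∧ st.PS s + ε ≤ b'))

/-- Buyer `b` is ε-interested in seller `s` offering `s'`. -/
def BuyerInterested (Mk : Market B S) (ε : ℝ) (st : MState B S) (s' : ℝ) (s : S) (b : B) : Prop :=
  (b, s) ∈ Mk.E ∧ ((¬ BMatched st b ∧ s' ≤ st.PB b) ∨ (BMatched st b ∧ s' + ε ≤ st.PB b))

/-- Increment rule for a buyer: a new bid is at most (lowest neighbouring offer + ε) and
at most the lowest offer of an unmatched neighbouring seller. -/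
def BuyIncrOK (Mk : Market B S) (ε : ℝ) (st : MState B S) (b : B) (b' : ℝ) : Prop :=
  (∀ s, (b, s) ∈ Mk.E → b' ≤ st.PS s + ε) ∧
  (∀ s, (b, s) ∈ Mk.E → ¬ SMatched st s → b' ≤ st.PS s)

/-- Increment rule for a seller. -/
def SellIncrOK (Mk : Market B S) (ε : ℝ) (st : MState B S) (s : S) (s' : ℝ) : Prop :=
  (∀ b, (b, s) ∈ Mk.E → st.PB b - ε ≤ s') ∧
  (∀ b, (b, s) ∈ Mk.E → ¬ BMatched st b → st.PB b ≤ s')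

/-- Match `b` with `s` at price `price`, displacing any previous partner of `s` (resp. `b`)
and equalizing the two submitted prices. -/
def matchPair (st : MState B S) (b : B) (s : S) (price : ℝ) : MState B S where
  PB := Function.update st.PB b price
  PS := Function.update st.PS s price
  M := insert (b, s) (st.M.filter fun p => p.1 ≠ b ∧ p.2 ≠ s)

/-- One legal move of the DOA mechanism (Mechanism 1): an arbitrary recognized unmatched
agent either submits an improving price (respecting the minimum-increment and increment
rules, when no counterpart is interested) or matches with an ε-interested counterpart,
giving priority to unmatched counterparts. -/
inductive Step (Mk : Market B S) (ε : ℝ) : MState B S → MState B S → Prop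
  | buyBid (st : MState B S) (b : B) (b' : ℝ) :
      ¬ BMatched st b → st.PB b < b' → b' ≤ Mk.valB b → MulEps ε b' →
      BuyIncrOK Mk ε st b b' →
      (∀ s, ¬ SellerInterested Mk ε st b' b s) →
      Step Mk ε st ⟨Function.update st.PB b b', st.PS, st.M⟩
  | buyMatch (st : MState B S) (b : B) (b' : ℝ) (s : S) :
      ¬ BMatched st b → st.PB b ≤ b' → b' ≤ Mk.valB b → MulEps ε b' →
      BuyIncrOK Mk ε st b b' →
      SellerInterested Mk ε st b' b s →
      ((∃ s₀, SellerInterested Mk ε st b' b s₀ ∧ ¬ SMatched st s₀) → ¬ SMatched st s) →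
      Step Mk ε st (matchPair st b s b')
  | sellOffer (st : MState B S) (s : S) (s' : ℝ) :
      ¬ SMatched st s → s' < st.PS s → Mk.valS s ≤ s' → MulEps ε s' →
      SellIncrOK Mk ε st s s' →
      (∀ b, ¬ BuyerInterested Mk ε st s' s b) →
      Step Mk ε st ⟨st.PB, Function.update st.PS s s', st.M⟩
  | sellMatch (st : MState B S) (s : S) (s' : ℝ) (b : B) :
      ¬ SMatched st s → s' ≤ st.PS s → Mk.valS s ≤ s' → MulEps ε s' →
      SellIncrOK Mk ε st s s' →
      BuyerInterested Mk ε st s' s b →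
      ((∃ b₀, BuyerInterested Mk ε st s' s b₀ ∧ ¬ BMatched st b₀) → ¬ BMatched st b) →
      Step Mk ε st (matchPair st b s s')

/-- A valid starting state: valid, bids below offers on every edge, prices in `[0,1]`
and integer multiples of `ε`. -/
def ValidStart (Mk : Market B S) (ε : ℝ) (st : MState B S) : Prop :=
  ValidState Mk st ∧ (∀ p ∈ Mk.E, st.PB p.1 ≤ st.PS p.2) ∧
  (∀ b, 0 ≤ st.PB b) ∧ (∀ s, st.PS s ≤ 1) ∧
  (∀ b, MulEps ε (st.PB b)) ∧ (∀ s, MulEps ε (st.PS s))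

/-- Reachability by a sequence of legal moves. -/
def Reachable (Mk : Market B S) (ε : ℝ) : MState B S → MState B S → Prop :=
  Relation.ReflTransGen (Step Mk ε)

/-- Apply a pair of agent permutations to a market state. -/
def mapState [DecidableEq B] [DecidableEq S]
    (σB : Equiv.Perm B) (σS : Equiv.Perm S) (st : MState B S) : MState B S where
  PB := st.PB ∘ σB.symm
  PS := st.PS ∘ σS.symm
  M := st.M.image fun p => (σB p.1, σS p.2)

/-!
Take `ε = 1/8`, index both sides by `Fin 4` (arithmetic mod 4) and join buyer `b` to sellers
`b` and `b - 1`. Every price in the run is `5ε` or `6ε`. In `buyerTurn k` buyer `k` is unmatched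
and all its neighbours are matched, so it may bid `6ε` and steal seller `k` (offering `5ε`) from
buyer `k + 1`. Then seller `k + 2` is unmatched with all neighbours matched; it offers `5ε` and
steals buyer `k + 3` (bidding `6ε`) from seller `k + 3`. The result is `buyerTurn (k + 1)`, the
image of `buyerTurn k` under the rotation `i ↦ i + 1` of both sides. Some agent is always
unmatched at a price different from its valuation, so no state of the run is ε-stable.
-/

instance (st : MState B S) : DecidablePred (BMatched st) :=
  fun b => inferInstanceAs (Decidable (∃ s, (b, s) ∈ st.M))

instance (st : MState B S) : DecidablePred (SMatched st) :=
  fun s => inferInstanceAs (Decidable (∃ b, (b, s) ∈ st.M))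

section Steal

variable {Mk : Market B S} {ε : ℝ} {st : MState B S}

/-- When every neighbour of the recognized agent is matched, the unmatched-first tie-breaking
rule and the second half of the increment rule are vacuous. -/
theorem Step.buyMatch_of_neighbors_matched {b : B} {s : S} {b' : ℝ}
    (hb : ¬ BMatched st b) (hle : st.PB b ≤ b') (hval : b' ≤ Mk.valB b) (hmul : MulEps ε b')
    (hincr : ∀ s, (b, s) ∈ Mk.E → b' ≤ st.PS s + ε)
    (hnbr : ∀ s, (b, s) ∈ Mk.E → SMatched st s)
    (hs : (b, s) ∈ Mk.E) (hint : st.PS s + ε ≤ b') :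
    Step Mk ε st (matchPair st b s b') :=
  Step.buyMatch st b b' s hb hle hval hmul ⟨hincr, fun s hs hns => absurd (hnbr s hs) hns⟩
    ⟨hs, .inr ⟨hnbr s hs, hint⟩⟩ fun ⟨s₀, hs₀, hns₀⟩ => absurd (hnbr s₀ hs₀.1) hns₀

theorem Step.sellMatch_of_neighbors_matched {s : S} {b : B} {s' : ℝ}
    (hs : ¬ SMatched st s) (hle : s' ≤ st.PS s) (hval : Mk.valS s ≤ s') (hmul : MulEps ε s')
    (hincr : ∀ b, (b, s) ∈ Mk.E → st.PB b - ε ≤ s')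
    (hnbr : ∀ b, (b, s) ∈ Mk.E → BMatched st b)
    (hb : (b, s) ∈ Mk.E) (hint : s' + ε ≤ st.PB b) :
    Step Mk ε st (matchPair st b s s') :=
  Step.sellMatch st s s' b hs hle hval hmul ⟨hincr, fun b hb hnb => absurd (hnbr b hb) hnb⟩
    ⟨hb, .inr ⟨hnbr b hb, hint⟩⟩ fun ⟨b₀, hb₀, hnb₀⟩ => absurd (hnbr b₀ hb₀.1) hnb₀

end Steal

section Interleave

variable {α : Type*} (a b : ℕ → α)

def interleave (t : ℕ) : α := if Even t then a (t / 2) else b (t / 2)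

theorem interleave_zero : interleave a b 0 = a 0 := by
  simp [interleave]

theorem interleave_two_mul (k : ℕ) : interleave a b (2 * k) = a k := by
  simp [interleave]

theorem interleave_two_mul_add_one (k : ℕ) : interleave a b (2 * k + 1) = b k := by
  simp [interleave, show (2 * k + 1) / 2 = k by omega]

variable {a b}

theorem forall_interleave {P : α → Prop} (ha : ∀ k, P (a k)) (hb : ∀ k, P (b k)) (t : ℕ) :
    P (interleave a b t) := by
  obtain ⟨k, rfl | rfl⟩ := Nat.even_or_odd' t
  · simpa only [interleave_two_mul] using ha k
  · simpa only [interleave_two_mul_add_one] using hb k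

theorem interleave_chain {R : α → α → Prop} (hab : ∀ k, R (a k) (b k))
    (hba : ∀ k, R (b k) (a (k + 1))) (t : ℕ) : R (interleave a b t) (interleave a b (t + 1)) := by
  obtain ⟨k, rfl | rfl⟩ := Nat.even_or_odd' t
  · simpa only [interleave_two_mul, interleave_two_mul_add_one] using hab k
  · rw [interleave_two_mul_add_one, show 2 * k + 1 + 1 = 2 * (k + 1) by ring, interleave_two_mul]
    exact hba k

theorem interleave_add_two {g : α → α} (ha : ∀ k, a (k + 1) = g (a k))
    (hb : ∀ k, b (k + 1) = g (b k)) (t : ℕ) : interleave a b (t + 2) = g (interleave a b t) := by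
  obtain ⟨k, rfl | rfl⟩ := Nat.even_or_odd' t
  · rw [show 2 * k + 2 = 2 * (k + 1) by ring, interleave_two_mul, interleave_two_mul, ha]
  · rw [show 2 * k + 1 + 2 = 2 * (k + 1) + 1 by ring, interleave_two_mul_add_one,
      interleave_two_mul_add_one, hb]

end Interleave

section EightCycle

open Fin.NatCast

def cycleMarket : Market (Fin 4) (Fin 4) where
  E := univ.filter fun p => p.1 = p.2 ∨ p.1 = p.2 + 1
  valB _ := 1
  valS _ := 0
  valB_nonneg _ := zero_le_one
  valB_le_one _ := le_rfl
  valS_nonneg _ := le_rfl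
  valS_le_one _ := zero_le_one

theorem mem_cycleMarket_E {p : Fin 4 × Fin 4} :
    p ∈ cycleMarket.E ↔ p.1 = p.2 ∨ p.1 = p.2 + 1 := by
  simp [cycleMarket]

noncomputable def buyerTurn (k : Fin 4) : MState (Fin 4) (Fin 4) where
  PB b := if b = k + 3 then 6 / 8 else 5 / 8
  PS s := if s = k ∨ s = k + 1 then 5 / 8 else 6 / 8
  M := {(k + 1, k), (k + 2, k + 1), (k + 3, k + 3)}

noncomputable def sellerTurn (k : Fin 4) : MState (Fin 4) (Fin 4) where
  PB b := if b = k ∨ b = k + 3 then 6 / 8 else 5 / 8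
  PS s := if s = k + 1 then 5 / 8 else 6 / 8
  M := {(k, k), (k + 2, k + 1), (k + 3, k + 3)}

theorem matchPair_buyerTurn (k : Fin 4) :
    matchPair (buyerTurn k) k k (6 / 8) = sellerTurn k := by
  simp only [matchPair, buyerTurn, sellerTurn, MState.mk.injEq]
  refine ⟨funext fun b => ?_, funext fun s => ?_, ?_⟩
  · grind
  · grind
  · revert k; decide

theorem matchPair_sellerTurn (k : Fin 4) :
    matchPair (sellerTurn k) (k + 3) (k + 2) (5 / 8) = buyerTurn (k + 1) := by
  simp only [matchPair, buyerTurn, sellerTurn, MState.mk.injEq]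
  refine ⟨funext fun b => ?_, funext fun s => ?_, ?_⟩
  · grind
  · grind
  · revert k; decide

theorem buyerTurn_not_bMatched (k : Fin 4) : ¬ BMatched (buyerTurn k) k := by
  revert k; decide

theorem sellerTurn_not_sMatched (k : Fin 4) : ¬ SMatched (sellerTurn k) (k + 2) := by
  revert k; decide

theorem five_eighths_le_buyerTurn_PS (k s : Fin 4) : 5 / 8 ≤ (buyerTurn k).PS s := by
  simp only [buyerTurn]; split <;> norm_num

theorem sellerTurn_PB_le_six_eighths (k b : Fin 4) : (sellerTurn k).PB b ≤ 6 / 8 := by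
  simp only [sellerTurn]; split <;> norm_num

theorem step_buyerTurn (k : Fin 4) : Step cycleMarket (1 / 8) (buyerTurn k) (sellerTurn k) := by
  rw [← matchPair_buyerTurn]
  refine Step.buyMatch_of_neighbors_matched (buyerTurn_not_bMatched k) ?_ ?_ ⟨6, by norm_num⟩
    (fun s _ => by linarith [five_eighths_le_buyerTurn_PS k s]) ?nbrs
    (mem_cycleMarket_E.2 (.inl rfl)) ?_
  case nbrs =>
    simp only [mem_cycleMarket_E]
    revert k; decide
  · grind [buyerTurn]
  · norm_num [cycleMarket]
  · grind [buyerTurn]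

theorem step_sellerTurn (k : Fin 4) :
    Step cycleMarket (1 / 8) (sellerTurn k) (buyerTurn (k + 1)) := by
  rw [← matchPair_sellerTurn]
  refine Step.sellMatch_of_neighbors_matched (sellerTurn_not_sMatched k) ?_ ?_ ⟨5, by norm_num⟩
    (fun b _ => by linarith [sellerTurn_PB_le_six_eighths k b]) ?nbrs
    (mem_cycleMarket_E.2 (.inr (by grind))) ?_
  case nbrs =>
    simp only [mem_cycleMarket_E]
    revert k; decide
  · grind [sellerTurn]
  · norm_num [cycleMarket]
  · grind [sellerTurn]

theorem buyerTurn_add_one (k : Fin 4) :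
    buyerTurn (k + 1) = mapState (Equiv.addRight 1) (Equiv.addRight 1) (buyerTurn k) := by
  simp only [mapState, buyerTurn, MState.mk.injEq, Equiv.addRight_symm, Equiv.coe_addRight,
    Function.comp_def]
  refine ⟨funext fun b => ?_, funext fun s => ?_, ?_⟩
  · grind
  · grind
  · revert k; decide

theorem sellerTurn_add_one (k : Fin 4) :
    sellerTurn (k + 1) = mapState (Equiv.addRight 1) (Equiv.addRight 1) (sellerTurn k) := by
  simp only [mapState, sellerTurn, MState.mk.injEq, Equiv.addRight_symm, Equiv.coe_addRight,
    Function.comp_def]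
  refine ⟨funext fun b => ?_, funext fun s => ?_, ?_⟩
  · grind
  · grind
  · revert k; decide

theorem not_isEpsStable_buyerTurn (ε : ℝ) (k : Fin 4) :
    ¬ IsEpsStable cycleMarket ε (buyerTurn k) := fun h => by
  have hk := h.2.1 k (buyerTurn_not_bMatched k)
  revert hk
  simp only [buyerTurn, cycleMarket]
  split <;> norm_num

theorem not_isEpsStable_sellerTurn (ε : ℝ) (k : Fin 4) :
    ¬ IsEpsStable cycleMarket ε (sellerTurn k) := fun h => by
  have hk := h.2.2.1 (k + 2) (sellerTurn_not_sMatched k)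
  revert hk
  simp only [sellerTurn, cycleMarket]
  split <;> norm_num

theorem validStart_buyerTurn (k : Fin 4) : ValidStart cycleMarket (1 / 8) (buyerTurn k) := by
  refine ⟨⟨?_, fun b => ?_, fun s => ?_, fun p hp => ?_⟩, fun p hp => ?_, fun b => ?_,
    fun s => ?_, fun b => ?_, fun s => ?_⟩
  · refine ⟨?_, ?_, ?_⟩ <;> revert k <;> decide
  · simp only [buyerTurn, cycleMarket]; split <;> norm_num
  · simp only [buyerTurn, cycleMarket]; split <;> norm_num
  · simp only [buyerTurn, mem_insert, mem_singleton] at hp ⊢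
    grind
  · simp only [mem_cycleMarket_E] at hp
    simp only [buyerTurn]
    grind
  · simp only [buyerTurn]; split <;> norm_num
  · simp only [buyerTurn]; split <;> norm_num
  · simp only [buyerTurn]; split; exacts [⟨6, by norm_num⟩, ⟨5, by norm_num⟩]
  · simp only [buyerTurn]; split; exacts [⟨5, by norm_num⟩, ⟨6, by norm_num⟩]

noncomputable def cycleRun : ℕ → MState (Fin 4) (Fin 4) :=
  interleave (fun k => buyerTurn k) (fun k => sellerTurn k)

theorem cycleRun_zero : cycleRun 0 = buyerTurn 0 :=
  interleave_zero _ _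

theorem step_cycleRun (t : ℕ) : Step cycleMarket (1 / 8) (cycleRun t) (cycleRun (t + 1)) :=
  interleave_chain (fun k => step_buyerTurn k)
    (fun k => by simpa only [Nat.cast_succ] using step_sellerTurn k) t

theorem not_isEpsStable_cycleRun (ε : ℝ) (t : ℕ) : ¬ IsEpsStable cycleMarket ε (cycleRun t) :=
  forall_interleave (P := fun st => ¬ IsEpsStable cycleMarket ε st)
    (fun k => not_isEpsStable_buyerTurn ε k) (fun k => not_isEpsStable_sellerTurn ε k) t

theorem cycleRun_add_two (t : ℕ) :
    cycleRun (t + 2) = mapState (Equiv.addRight 1) (Equiv.addRight 1) (cycleRun t) :=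
  interleave_add_two (fun k => by simpa only [Nat.cast_succ] using buyerTurn_add_one k)
    (fun k => by simpa only [Nat.cast_succ] using sellerTurn_add_one k) t

theorem mem_cycleMarket_E_addRight_one (p : Fin 4 × Fin 4) :
    p ∈ cycleMarket.E ↔ (p.1 + 1, p.2 + 1) ∈ cycleMarket.E := by
  simp [mem_cycleMarket_E]

end EightCycle

/-- there is a market on an 8-cycle trading graph (4 buyers of valuation 1
and 4 sellers of valuation 0) together with an infinite sequence of legal moves of the
deterministic DOA mechanism, starting from a state reachable from a valid starting state,
that never reaches an ε-stable state; the run is periodic up to a valuation- and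
edge-preserving graph automorphism, returning to an isomorphic state every 2 steps. -/
theorem doa_may_cycle_on_incomplete_graphs :
    ∃ (Mk : Market (Fin 4) (Fin 4)) (ε : ℝ), 0 < ε ∧
      Mk.E = Finset.univ.filter (fun p : Fin 4 × Fin 4 => p.1 = p.2 ∨ p.1 = p.2 + 1) ∧
      (∀ b, Mk.valB b = 1) ∧ (∀ s, Mk.valS s = 0) ∧
      ∃ (f : ℕ → MState (Fin 4) (Fin 4)) (st₀ : MState (Fin 4) (Fin 4)),
        ValidStart Mk ε st₀ ∧ Reachable Mk ε st₀ (f 0) ∧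
        (∀ t, Step Mk ε (f t) (f (t + 1))) ∧
        (∀ t, ¬ IsEpsStable Mk ε (f t)) ∧
        ∃ (σB σS : Equiv.Perm (Fin 4)),
          (∀ p : Fin 4 × Fin 4, p ∈ Mk.E ↔ (σB p.1, σS p.2) ∈ Mk.E) ∧
          (∀ b, Mk.valB (σB b) = Mk.valB b) ∧ (∀ s, Mk.valS (σS s) = Mk.valS s) ∧
          ∀ t, f (t + 2) = mapState σB σS (f t) :=
  ⟨cycleMarket, 1 / 8, by norm_num, rfl, fun _ => rfl, fun _ => rfl, cycleRun, buyerTurn 0,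
    validStart_buyerTurn 0, cycleRun_zero ▸ .refl, step_cycleRun, not_isEpsStable_cycleRun _,
    Equiv.addRight 1, Equiv.addRight 1, mem_cycleMarket_E_addRight_one, fun _ => rfl,
    fun _ => rfl, cycleRun_add_two⟩
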